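/- Let F₁ and F₂ be distinct strictly increasing continuous distribution functions on ℝ, with associated Borel probability measures p₁ and p₂. Then the infinite power measures p₁^ℕ and p₂^ℕ on ℝ^ℕ are mutually singular (orthogonal): there exists a Borel set E ⊆ ℝ^ℕ with p₁^ℕ(E) = 1 and p₂^ℕ(E) = 0. -/

import Mathlib

/-! By the strong law of large numbers, under `μ^ℕ` the frequency with which the coordinates
fall into a measurable set `s` converges almost surely to `μ s`. Two distinct probability measures
differ on some `s`, so the sequences whose frequencies in `s` converge to `μ₁ s` form a set that is
`μ₁^ℕ`-full and `μ₂^ℕ`-null. Distinct distribution functions give measures that differ on some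
half-line `(-∞, t]`, and a measure with the finite-dimensional marginals of `μ^ℕ` is `μ^ℕ`. -/

open MeasureTheory Filter

/-- Extension of a distribution function `F` to `EReal`, with value `0` at `-∞`
and `1` at `+∞`. -/
noncomputable def cdfExt (F : ℝ → ℝ) : EReal → ℝ := fun a =>
  if a = ⊥ then 0 else if a = ⊤ then 1 else F a.toReal

/-- A sequence `(xₖ)` of reals is `p`-equidistributed (for the measure `p` with
distribution function `F`) if for every interval `[a,b]` with endpoints possibly `±∞`,
the asymptotic proportion of the first `n` terms lying in `[a,b]` is `F(b) - F(a)`. -/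
noncomputable def IsEquidistributedWRT (F : ℝ → ℝ) (x : ℕ → ℝ) : Prop :=
  ∀ a b : EReal, a ≤ b →
    Tendsto (fun n : ℕ =>
        (((Finset.range n).filter
            (fun k => a ≤ (x k : EReal) ∧ (x k : EReal) ≤ b)).card : ℝ) / n)
      atTop (nhds (cdfExt F b - cdfExt F a))

/-- `ν` is the countable power `p^ℕ` of `p`. -/
def IsInfinitePower {X : Type*} [MeasurableSpace X] (μ : Measure X)
    (ν : Measure (ℕ → X)) : Prop :=
  IsProbabilityMeasure ν ∧
    ∀ n : ℕ, ν.map (fun x (i : Fin n) => x (i : ℕ)) = Measure.pi (fun _ : Fin n => μ)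

open ProbabilityTheory

namespace IsInfinitePower

variable {X : Type*} [MeasurableSpace X] {μ : Measure X} {ν : Measure (ℕ → X)}

theorem map_eval_zero (h : IsInfinitePower μ ν) : ν.map (fun x => x 0) = μ := by
  have hfst : (fun x : ℕ → X => x 0) =
      MeasurableEquiv.funUnique (Fin 1) X ∘ fun x (i : Fin 1) => x i := rfl
  rw [hfst, ← Measure.map_map (MeasurableEquiv.measurable _) (by fun_prop), h.2 1]
  exact (measurePreserving_funUnique μ (Fin 1)).map_eq

theorem isProbabilityMeasure (h : IsInfinitePower μ ν) : IsProbabilityMeasure μ := by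
  have := h.1
  rw [← h.map_eval_zero]
  exact Measure.isProbabilityMeasure_map (measurable_pi_apply 0).aemeasurable

theorem eq_infinitePi (h : IsInfinitePower μ ν) : ν = Measure.infinitePi fun _ => μ := by
  have := h.isProbabilityMeasure
  refine Measure.eq_infinitePi _ fun s t ht => ?_
  obtain ⟨n, hsn⟩ := s.exists_nat_subset_range
  set u : Finset (Fin n) := s.preimage Fin.val Fin.val_injective.injOn
  have hpre : Set.pi ↑s t =
      (fun x (i : Fin n) => x i) ⁻¹' Set.pi (u : Set (Fin n)) (fun i => t i) := by
    ext x
    simp only [Set.mem_pi, Finset.mem_coe, Set.mem_preimage, u, Finset.mem_preimage]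
    exact ⟨fun hx i hi => hx i hi, fun hx i hi => hx ⟨i, by simpa using hsn hi⟩ hi⟩
  rw [hpre, ← Measure.map_apply (by fun_prop)
    (MeasurableSet.pi u.countable_toSet fun i _ => ht i), h.2 n, Measure.pi_pi_finset]
  exact Finset.prod_preimage _ _ _ (fun i => μ (t i))
    fun i hi hni => (hni ⟨⟨i, by simpa using hsn hi⟩, rfl⟩).elim

end IsInfinitePower

theorem ProbabilityTheory.strong_law_ae_infinitePi {X : Type*} [MeasurableSpace X] (μ : Measure X)
    [IsProbabilityMeasure μ] {g : X → ℝ} (hg : Measurable g) (hint : Integrable g μ) :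
    ∀ᵐ x ∂Measure.infinitePi (fun _ : ℕ => μ),
      Tendsto (fun n : ℕ => (∑ k ∈ Finset.range n, g (x k)) / n) atTop (nhds (∫ y, g y ∂μ)) := by
  have hcoord (k : ℕ) := measurePreserving_eval_infinitePi (fun _ : ℕ => μ) k
  have hindep : iIndepFun (fun k (x : ℕ → X) => g (x k)) (Measure.infinitePi fun _ => μ) :=
    iIndepFun_infinitePi fun _ => hg
  have hident (k : ℕ) : IdentDistrib (fun x : ℕ → X => g (x k)) (fun x => g (x 0))
      (Measure.infinitePi fun _ => μ) (Measure.infinitePi fun _ => μ) :=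
    (IdentDistrib.mk (hcoord k).measurable.aemeasurable (hcoord 0).measurable.aemeasurable
      (by rw [(hcoord k).map_eq, (hcoord 0).map_eq])).comp hg
  have hmean : ∫ x, g (x 0) ∂Measure.infinitePi (fun _ => μ) = ∫ y, g y ∂μ := by
    rw [← integral_map (hcoord 0).measurable.aemeasurable
      (by rw [(hcoord 0).map_eq]; exact hg.aestronglyMeasurable), (hcoord 0).map_eq]
  rw [← hmean]
  exact strong_law_ae_real _ ((hcoord 0).integrable_comp_of_integrable hint)
    (fun i j hij => hindep.indepFun hij) hident

theorem MeasureTheory.Measure.infinitePi_mutuallySingular_of_ne {X : Type*} [MeasurableSpace X]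
    {μ₁ μ₂ : Measure X} [IsProbabilityMeasure μ₁] [IsProbabilityMeasure μ₂] (h : μ₁ ≠ μ₂) :
    Measure.infinitePi (fun _ : ℕ => μ₁) ⟂ₘ Measure.infinitePi (fun _ : ℕ => μ₂) := by
  obtain ⟨s, hs, hμs⟩ : ∃ s, MeasurableSet s ∧ μ₁.real s ≠ μ₂.real s := by
    by_contra! hall
    exact h (Measure.ext fun s hs =>
      (ENNReal.toReal_eq_toReal_iff' (measure_ne_top _ _) (measure_ne_top _ _)).1 (hall s hs))
  have hg : Measurable (s.indicator 1 : X → ℝ) := measurable_const.indicator hs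
  have hlaw₁ := strong_law_ae_infinitePi μ₁ hg ((integrable_const 1).indicator hs)
  have hlaw₂ := strong_law_ae_infinitePi μ₂ hg ((integrable_const 1).indicator hs)
  rw [integral_indicator_one hs] at hlaw₁ hlaw₂
  set E := {x : ℕ → X |
    Tendsto (fun n : ℕ => (∑ k ∈ Finset.range n, s.indicator 1 (x k)) / (n : ℝ)) atTop
      (nhds (μ₁.real s))}
  have hE : MeasurableSet E := measurableSet_tendsto _ fun n => by fun_prop
  refine ⟨Eᶜ, hE.compl, mem_ae_iff.1 hlaw₁, ?_⟩
  rw [compl_compl]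
  exact measure_mono_null (fun x hx₁ hx₂ => hμs (tendsto_nhds_unique hx₁ hx₂))
    (mem_ae_iff.1 hlaw₂)

theorem infinitePowers_orthogonal_general
    (F₁ F₂ : ℝ → ℝ) (h₁mono : StrictMono F₁) (h₁0 : Tendsto F₁ atBot (nhds 0))
    (hne : F₁ ≠ F₂)
    (p₁ p₂ : Measure ℝ)
    (hp₁ : ∀ t, p₁ (Set.Iic t) = ENNReal.ofReal (F₁ t))
    (hp₂ : ∀ t, p₂ (Set.Iic t) = ENNReal.ofReal (F₂ t))
    (ν₁ ν₂ : Measure (ℕ → ℝ))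
    (hν₁ : IsInfinitePower p₁ ν₁) (hν₂ : IsInfinitePower p₂ ν₂) :
    ∃ E : Set (ℕ → ℝ), MeasurableSet E ∧ ν₁ E = 1 ∧ ν₂ E = 0 := by
  have := hν₁.isProbabilityMeasure
  have := hν₂.isProbabilityMeasure
  obtain ⟨t, ht⟩ := Function.ne_iff.mp hne
  have hF₁pos : 0 < F₁ t :=
    (h₁mono.monotone.le_of_tendsto h₁0 (t - 1)).trans_lt (h₁mono (sub_one_lt t))
  -- `ENNReal.ofReal` truncates at `0`, so it is `0 < F₁ t` that makes `p₁ (Iic t) ≠ p₂ (Iic t)`.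
  have hp : p₁ ≠ p₂ := by
    intro hp
    have hF : ENNReal.ofReal (F₁ t) = ENNReal.ofReal (F₂ t) := by rw [← hp₁, ← hp₂, hp]
    have hF₂pos : 0 < F₂ t := ENNReal.ofReal_pos.1 (hF ▸ ENNReal.ofReal_pos.2 hF₁pos)
    exact ht ((ENNReal.ofReal_eq_ofReal_iff hF₁pos.le hF₂pos.le).1 hF)
  have hsing : ν₁ ⟂ₘ ν₂ := by
    rw [hν₁.eq_infinitePi, hν₂.eq_infinitePi]
    exact Measure.infinitePi_mutuallySingular_of_ne hp
  obtain ⟨S, hS, hν₁S, hν₂S⟩ := hsing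
  have := hν₁.1
  exact ⟨Sᶜ, hS.compl, (prob_compl_eq_one_iff hS).2 hν₁S, hν₂S⟩

/-- The infinite powers of two Borel probability measures on `ℝ` given by distinct
strictly increasing continuous distribution functions are mutually singular. -/
theorem infinitePowers_orthogonal
    (F₁ F₂ : ℝ → ℝ) (h₁mono : StrictMono F₁) (h₁cont : Continuous F₁)
    (h₁0 : Tendsto F₁ atBot (nhds 0)) (h₁1 : Tendsto F₁ atTop (nhds 1))
    (h₂mono : StrictMono F₂) (h₂cont : Continuous F₂)
    (h₂0 : Tendsto F₂ atBot (nhds 0)) (h₂1 : Tendsto F₂ atTop (nhds 1))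
    (hne : F₁ ≠ F₂)
    (p₁ p₂ : Measure ℝ)
    (hp₁ : ∀ t, p₁ (Set.Iic t) = ENNReal.ofReal (F₁ t))
    (hp₂ : ∀ t, p₂ (Set.Iic t) = ENNReal.ofReal (F₂ t))
    (ν₁ ν₂ : Measure (ℕ → ℝ))
    (hν₁ : IsInfinitePower p₁ ν₁) (hν₂ : IsInfinitePower p₂ ν₂) :
    ∃ E : Set (ℕ → ℝ), MeasurableSet E ∧ ν₁ E = 1 ∧ ν₂ E = 0 :=
  infinitePowers_orthogonal_general F₁ F₂ h₁mono h₁0 hne p₁ p₂ hp₁ hp₂ ν₁ ν₂ hν₁ hν₂
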